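/- Let Q be a non-trivial commutative unital quantale. Every Q-map ζ : X ⇸ Y between arbitrary sets is the graph of a map in Set (i.e., there exists a function f : X → Y with ζ = f_∘) if and only if Q is lean. -/

import Mathlib

open Classical

noncomputable section

/-- Composition of `Q`-relations: `(ψ ∘ φ)(x,z) = ⨆ y, ψ y z & φ x y`. -/
def QR.comp {Q : Type*} [CompleteLattice Q] [Mul Q] {X Y Z : Type*}
    (ψ : Y → Z → Q) (φ : X → Y → Q) : X → Z → Q :=
  fun x z => ⨆ y, ψ y z * φ x y

/-- The identity `Q`-relation on `X`: `k` on the diagonal and `⊥` elsewhere. -/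
def QR.id {Q : Type*} [CompleteLattice Q] [One Q] (X : Type*) : X → X → Q :=
  fun x y => if x = y then 1 else ⊥

/-- `ζ*(y,x) = ⨅ z, (ζ x z → id_Y y z)`, the canonical right-adjoint candidate of `ζ`
with respect to the residuation `himp`. -/
def QR.star {Q : Type*} [CompleteLattice Q] [One Q] {X Y : Type*}
    (himp : Q → Q → Q) (ζ : X → Y → Q) : Y → X → Q :=
  fun y x => ⨅ z, himp (ζ x z) (QR.id Y y z)

/-- `ζ` is a `Q`-map: `id_X ≤ ζ* ∘ ζ` and `ζ ∘ ζ* ≤ id_Y`. -/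
def QR.IsMap {Q : Type*} [CompleteLattice Q] [Mul Q] [One Q] {X Y : Type*}
    (himp : Q → Q → Q) (ζ : X → Y → Q) : Prop :=
  (∀ x x', QR.id X x x' ≤ QR.comp (QR.star himp ζ) ζ x x') ∧
  (∀ y y', QR.comp ζ (QR.star himp ζ) y y' ≤ QR.id Y y y')

/-- `Q` is lean. -/
def IsLeanQuantale (Q : Type*) [CompleteLattice Q] [CommMonoid Q] : Prop :=
  (∀ p q : Q, p ⊔ q = 1 → p * q = ⊥ → p = 1 ∨ q = 1) ∧
  (∀ p q : Q, p * q = 1 ↔ p = 1 ∧ q = 1)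

/-- `Q` is weakly lean. -/
def IsWeaklyLeanQuantale (Q : Type*) [CompleteLattice Q] [CommMonoid Q] : Prop :=
  ∀ (I : Type) (p q : I → Q),
    (⨆ i, p i * q i) = 1 → (∀ i j, i ≠ j → p i * q j = ⊥) →
    1 ≤ ⨆ i, (p i ⊓ q i) * (p i ⊓ q i)

/-- The graph of a function `f : X → Y`: `k` where `y = f x` and `⊥` elsewhere. -/
def QR.graph {Q : Type*} [CompleteLattice Q] [One Q] {X Y : Type*} (f : X → Y) :
    X → Y → Q :=
  fun x y => if y = f x then 1 else ⊥

/-!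
For a `Q`-map `ζ` and a point `x`, the elements `a y = ζ*(y,x) & ζ(x,y)` form a partition of
unity: `⋁ y, a y = k` (from `id ≤ ζ* ∘ ζ`) and `a y & a y' = ⊥` for `y ≠ y'` (from
`ζ ∘ ζ* ≤ id`). If no `a y` were `k`, the first leanness condition applied to `a y` and
`⋁_{y' ≠ y} a y'` would give `a y = ⊥` for all `y`, contradicting `⊥ < k`. So some `a y = k`;
the second condition gives `ζ(x,y) = k = ζ*(y,x)`, and then `ζ(x,y') = ζ(x,y') & ζ*(y,x) = ⊥`.

Conversely, a relation `ζ(x,y) = v y` out of a point is a `Q`-map once there are `u` with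
`u y & v z ≤ id(y,z)` and `k ≤ ⋁ y, u y & v y`. Taking `u = p`, `v = q` into a point when
`p & q = k`, and `u = v = (p, q)` into two points when `p ∨ q = k` and `p & q = ⊥`, the
requirement that these maps be graphs is exactly leanness.
-/

theorem IsQuantale.of_mul_sSup_distrib {Q : Type*} [CommSemigroup Q] [CompleteLattice Q]
    (h : ∀ (p : Q) (s : Set Q), p * sSup s = ⨆ q ∈ s, p * q) : IsQuantale Q where
  mul_sSup_distrib := h
  sSup_mul_distrib s p := by simpa only [mul_comm] using h p s

theorem IsLeanQuantale.exists_eq_one_of_iSup_eq_one {Q : Type*} [CommMonoid Q]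
    [CompleteLattice Q] [IsQuantale Q] (hlean : IsLeanQuantale Q) (hbot : (⊥ : Q) < 1)
    {Y : Type*} {a : Y → Q} (hsup : ⨆ y, a y = 1) (horth : ∀ y y', y ≠ y' → a y * a y' = ⊥) :
    ∃ y, a y = 1 := by
  by_contra! hne
  have ha : ∀ y, a y = ⊥ := by
    intro y
    set b := ⨆ (y') (_ : y' ≠ y), a y'
    have hab : a y * b = ⊥ := by
      simp only [b, Quantale.mul_iSup_distrib, iSup_eq_bot]
      intro y'
      by_cases hy' : y' = y
      · simp [hy']
      · rw [iSup_pos hy', horth y y' (Ne.symm hy')]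
    have hb : b = 1 :=
      (hlean.1 _ _ (by rw [← iSup_split_single, hsup]) hab).resolve_left (hne y)
    rw [← hab, hb, mul_one]
  exact hbot.ne (by simpa [ha] using hsup)

namespace QR

section Residuation

variable {Q : Type*} [CommMonoid Q] [CompleteLattice Q]
  {himp : Q → Q → Q} (hres : ∀ p q r : Q, p * q ≤ r ↔ p ≤ himp q r)
include hres

theorem le_star_of_forall_mul_le {X Y : Type*} {ζ : X → Y → Q} {p : Q} {y : Y} {x : X}
    (h : ∀ z, p * ζ x z ≤ QR.id Y y z) : p ≤ QR.star himp ζ y x :=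
  le_iInf fun z => (hres _ _ _).1 (h z)

theorem mul_star_le_id {X Y : Type*} (ζ : X → Y → Q) (x : X) (y y' : Y) :
    ζ x y * QR.star himp ζ y' x ≤ QR.id Y y' y := by
  rw [mul_comm]
  exact (hres _ _ _).2 (iInf_le _ y)

theorem isMap_iff {X Y : Type*} (ζ : X → Y → Q) :
    QR.IsMap himp ζ ↔ ∀ x x', QR.id X x x' ≤ QR.comp (QR.star himp ζ) ζ x x' :=
  ⟨And.left, fun h => ⟨h, fun y y' => iSup_le fun x => mul_star_le_id hres ζ x y' y⟩⟩

end Residuation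

theorem graph_apply_self {Q : Type*} [CompleteLattice Q] [One Q] {X Y : Type*} (f : X → Y)
    (x : X) : (QR.graph f x (f x) : Q) = 1 :=
  if_pos rfl

variable {Q : Type*} [CommMonoid Q] [CompleteLattice Q] [IsQuantale Q]
  {himp : Q → Q → Q} (hres : ∀ p q r : Q, p * q ≤ r ↔ p ≤ himp q r)
include hres

open Quantale

theorem isMap_const_of_le_iSup {X Y : Type*} (u v : Y → Q)
    (hle : ∀ y z, u y * v z ≤ QR.id Y y z) (hone : 1 ≤ ⨆ y, u y * v y) :
    QR.IsMap himp (fun (_ : X) => v) := by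
  refine (isMap_iff hres _).2 fun x x' => ?_
  calc QR.id X x x' ≤ 1 := by unfold QR.id; split_ifs <;> simp
    _ ≤ ⨆ y, u y * v y := hone
    _ ≤ _ := iSup_mono fun y => mul_le_mul_left (le_star_of_forall_mul_le hres (hle y)) _

section GraphsToLean

variable (H : ∀ (X Y : Type) (ζ : X → Y → Q), QR.IsMap himp ζ → ∃ f : X → Y, ζ = QR.graph f)
include H

theorem exists_eq_one_of_forall_eq_graph {Y : Type} (u v : Y → Q)
    (hle : ∀ y z, u y * v z ≤ QR.id Y y z) (hone : 1 ≤ ⨆ y, u y * v y) : ∃ y, v y = 1 := by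
  obtain ⟨f, hf⟩ := H PUnit Y _ (isMap_const_of_le_iSup hres u v hle hone)
  exact ⟨f .unit, (congrFun (congrFun hf _) _).trans (graph_apply_self f _)⟩

theorem eq_one_of_mul_eq_one_of_forall_eq_graph {p q : Q} (hpq : p * q = 1) : q = 1 := by
  obtain ⟨_, hq⟩ := exists_eq_one_of_forall_eq_graph hres H (Y := PUnit)
    (fun _ => p) (fun _ => q) (by simp [QR.id, hpq]) (by simp [hpq])
  exact hq

theorem eq_one_or_eq_one_of_forall_eq_graph {p q : Q} (hsup : p ⊔ q = 1) (hprod : p * q = ⊥) :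
    p = 1 ∨ q = 1 := by
  have hp : p ≤ 1 := hsup ▸ le_sup_left
  have hq : q ≤ 1 := hsup ▸ le_sup_right
  have hle : ∀ b c : Bool, cond b p q * cond c p q ≤ QR.id Bool b c := by
    rintro (_ | _) (_ | _) <;>
      simp [QR.id, hprod, mul_comm q p, mul_le_one' hp hp, mul_le_one' hq hq]
  have hone : (1 : Q) = ⨆ b : Bool, cond b p q * cond b p q := by
    calc (1 : Q) = (p ⊔ q) * (p ⊔ q) := by rw [hsup, one_mul]
      _ = p * p ⊔ q * q := by
        rw [mul_sup_distrib, sup_mul_distrib, sup_mul_distrib, mul_comm q p, hprod]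
        simp
      _ = ⨆ b : Bool, cond b p q * cond b p q := by rw [iSup_bool_eq]; rfl
  obtain ⟨_ | _, h⟩ := exists_eq_one_of_forall_eq_graph hres H _ _ hle hone.le
  exacts [Or.inr h, Or.inl h]

theorem isLeanQuantale_of_forall_eq_graph : IsLeanQuantale Q :=
  ⟨fun _ _ => eq_one_or_eq_one_of_forall_eq_graph hres H,
    fun p q => ⟨fun h => ⟨eq_one_of_mul_eq_one_of_forall_eq_graph hres H (by rwa [mul_comm]),
      eq_one_of_mul_eq_one_of_forall_eq_graph hres H h⟩, fun ⟨hp, hq⟩ => by rw [hp, hq, one_mul]⟩⟩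

end GraphsToLean

section LeanToGraphs

variable (hlean : IsLeanQuantale Q) (hbot : (⊥ : Q) < 1)
include hlean hbot

theorem exists_star_mul_eq_one {X Y : Type*} {ζ : X → Y → Q} (hζ : QR.IsMap himp ζ) (x : X) :
    ∃ y, QR.star himp ζ y x * ζ x y = 1 := by
  have hunit : ⨆ y, QR.star himp ζ y x * ζ x y = 1 := by
    refine le_antisymm (iSup_le fun y => ?_) (by simpa [QR.id, QR.comp] using hζ.1 x x)
    simpa [QR.id, mul_comm] using mul_star_le_id hres ζ x y y
  refine hlean.exists_eq_one_of_iSup_eq_one hbot hunit fun y y' hyy' => ?_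
  have hcross : ζ x y * QR.star himp ζ y' x = ⊥ := by
    simpa [QR.id, hyy'.symm] using mul_star_le_id hres ζ x y y'
  rw [mul_comm (QR.star himp ζ y x), mul_mul_mul_comm, hcross, bot_mul]

theorem exists_eq_graph_of_isMap {X Y : Type*} {ζ : X → Y → Q} (hζ : QR.IsMap himp ζ) :
    ∃ f : X → Y, ζ = QR.graph f := by
  choose f hf using exists_star_mul_eq_one hres hlean hbot hζ
  refine ⟨f, funext₂ fun x y => ?_⟩
  obtain ⟨hstar, hζx⟩ := (hlean.2 _ _).1 (hf x)
  unfold QR.graph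
  split_ifs with hy
  · rwa [hy]
  · simpa [hstar, QR.id, Ne.symm hy] using mul_star_le_id hres ζ x y (f x)

end LeanToGraphs

end QR

/-- every `Q`-map between arbitrary sets is the graph of a map in `Set`
iff `Q` is lean. -/
theorem stmt10 {Q : Type*} [CompleteLattice Q] [CommMonoid Q]
    (hbot : (⊥ : Q) < 1)
    (hdist : ∀ (p : Q) (s : Set Q), p * sSup s = ⨆ q ∈ s, p * q)
    (himp : Q → Q → Q)
    (hres : ∀ p q r : Q, p * q ≤ r ↔ p ≤ himp q r) :
    (∀ (X Y : Type) (ζ : X → Y → Q), QR.IsMap himp ζ →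
      ∃ f : X → Y, ζ = QR.graph f) ↔
    IsLeanQuantale Q := by
  have := IsQuantale.of_mul_sSup_distrib hdist
  exact ⟨QR.isLeanQuantale_of_forall_eq_graph hres,
    fun hlean _ _ _ hζ => QR.exists_eq_graph_of_isMap hres hlean hbot hζ⟩
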